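/- arXiv:1804.08507 — 8 statements merged into one kernel-verified Lean document; each statement's English description precedes it below -/
import Mathlib

section
/- Let A : X → X, B : U → X, C : X → Y, D : U → Y be bounded linear operators between Hilbert spaces such that the block operator matrix M = [[A,B],[C,D]] : X ⊕ U → X ⊕ Y is a contraction. Then for every z in the open unit disk of ℂ, the operator I - zA is boundedly invertible and the transfer function F(z) = D + z C (I - zA)⁻¹ B satisfies ‖F(z)‖ ≤ 1. -/
/-!
Since `M` is a contraction, so is `A`, hence `‖z • A‖ < 1` and `1 - z • A` is inverted by a
Neumann series. For an input `u`, the state `w = (1 - z • A)⁻¹ (B u)` satisfies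
`A (z • w) + B u = w`, so feeding `(z • w, u)` to `M` returns `(w, F(z) u)`. As `‖z • w‖ ≤ ‖w‖`,
the contraction inequality leaves `‖F(z) u‖ ≤ ‖u‖`.
-/

section Colligation

variable {𝕜 X U Y : Type*} [NontriviallyNormedField 𝕜]
  [SeminormedAddCommGroup X] [NormedSpace 𝕜 X]
  [SeminormedAddCommGroup U] [NormedSpace 𝕜 U]
  [SeminormedAddCommGroup Y] [NormedSpace 𝕜 Y]

/-- The block operator `[[A, B], [C, D]] : X × U → X × Y` is a contraction for the
`ℓ²`-norm on the product. -/
def IsContractiveColligation (A : X →L[𝕜] X) (B : U →L[𝕜] X) (C : X →L[𝕜] Y)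
    (D : U →L[𝕜] Y) : Prop :=
  ∀ (x : X) (u : U), ‖A x + B u‖ ^ 2 + ‖C x + D u‖ ^ 2 ≤ ‖x‖ ^ 2 + ‖u‖ ^ 2

namespace IsContractiveColligation

variable {A : X →L[𝕜] X} {B : U →L[𝕜] X} {C : X →L[𝕜] Y} {D : U →L[𝕜] Y}

theorem opNorm_le_one (hM : IsContractiveColligation A B C D) : ‖A‖ ≤ 1 := by
  refine A.opNorm_le_bound zero_le_one fun x => ?_
  have h := hM x 0
  simp only [map_zero, add_zero, norm_zero] at h
  rw [one_mul]
  exact le_of_sq_le_sq (by nlinarith [sq_nonneg ‖C x‖]) (norm_nonneg x)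

theorem norm_output_le (hM : IsContractiveColligation A B C D) {x : X} {u : U}
    (hx : ‖x‖ ≤ ‖A x + B u‖) : ‖C x + D u‖ ≤ ‖u‖ := by
  have h := hM x u
  have hx2 : ‖x‖ ^ 2 ≤ ‖A x + B u‖ ^ 2 := pow_le_pow_left₀ (norm_nonneg x) hx 2
  exact le_of_sq_le_sq (by linarith) (norm_nonneg u)

end IsContractiveColligation

end Colligation

theorem stmt0_general
    {X U Y : Type*}
    [NormedAddCommGroup X] [InnerProductSpace ℂ X] [CompleteSpace X]
    [NormedAddCommGroup U] [InnerProductSpace ℂ U]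
    [NormedAddCommGroup Y] [InnerProductSpace ℂ Y]
    (A : X →L[ℂ] X) (B : U →L[ℂ] X) (C : X →L[ℂ] Y) (D : U →L[ℂ] Y)
    (hM : ∀ (x : X) (u : U), ‖A x + B u‖ ^ 2 + ‖C x + D u‖ ^ 2 ≤ ‖x‖ ^ 2 + ‖u‖ ^ 2)
    (z : ℂ) (hz : ‖z‖ < 1) :
    ∃ G : X →L[ℂ] X,
      (1 - z • A) ∘L G = 1 ∧ G ∘L (1 - z • A) = 1 ∧
      ∀ u : U, ‖D u + z • C (G (B u))‖ ≤ ‖u‖ := by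
  have hM : IsContractiveColligation A B C D := hM
  have hzA : ‖z • A‖ < 1 := calc
    ‖z • A‖ = ‖z‖ * ‖A‖ := norm_smul z A
    _ ≤ ‖z‖ := mul_le_of_le_one_right (norm_nonneg z) hM.opNorm_le_one
    _ < 1 := hz
  set t := Units.oneSub (z • A) hzA
  refine ⟨↑t⁻¹, t.mul_inv, t.inv_mul, fun u => ?_⟩
  set w := (↑t⁻¹ : X →L[ℂ] X) (B u)
  have hstate : A (z • w) + B u = w := by
    have h : w - z • A w = B u := congrArg (fun T : X →L[ℂ] X => T (B u)) t.mul_inv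
    rw [map_smul, ← h]
    abel
  have hsmall : ‖z • w‖ ≤ ‖A (z • w) + B u‖ := by
    rw [hstate, norm_smul]
    exact mul_le_of_le_one_left (norm_nonneg w) hz.le
  have hout := hM.norm_output_le hsmall
  rwa [map_smul, add_comm] at hout

/-- If the block operator `M = [[A,B],[C,D]] : X ⊕ U → X ⊕ Y` is a contraction
(expressed spatially: `‖Ax+Bu‖² + ‖Cx+Du‖² ≤ ‖x‖² + ‖u‖²`), then for every `z`
in the open unit disk `I - zA` is boundedly invertible and the transfer function
`F(z) = D + zC(I - zA)⁻¹B` satisfies `‖F(z)‖ ≤ 1`, i.e. `‖F(z)u‖ ≤ ‖u‖` for all `u`. -/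
theorem stmt0
    {X U Y : Type*}
    [NormedAddCommGroup X] [InnerProductSpace ℂ X] [CompleteSpace X]
    [NormedAddCommGroup U] [InnerProductSpace ℂ U] [CompleteSpace U]
    [NormedAddCommGroup Y] [InnerProductSpace ℂ Y] [CompleteSpace Y]
    (A : X →L[ℂ] X) (B : U →L[ℂ] X) (C : X →L[ℂ] Y) (D : U →L[ℂ] Y)
    (hM : ∀ (x : X) (u : U), ‖A x + B u‖ ^ 2 + ‖C x + D u‖ ^ 2 ≤ ‖x‖ ^ 2 + ‖u‖ ^ 2)
    (z : ℂ) (hz : ‖z‖ < 1) :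
    ∃ G : X →L[ℂ] X,
      (1 - z • A) ∘L G = 1 ∧ G ∘L (1 - z • A) = 1 ∧
      ∀ u : U, ‖D u + z • C (G (B u))‖ ≤ ‖u‖ :=
  stmt0_general A B C D hM z hz
end

section
/- Let M = [[A,B],[C,D]] be a contractive block operator on X ⊕ U into X ⊕ Y. For every z in the open unit disk and every u ∈ U, setting x' = (I - zA)⁻¹ B u and x = z x', one has ‖x'‖² + ‖D u + C x‖² ≤ ‖x‖² + ‖u‖², and consequently ‖F(z)u‖² ≤ ‖u‖² where F(z) = D + zC(I - zA)⁻¹B. -/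
/-! The resolvent equation says that `x' = A x + B u`, i.e. `(x', D u + C x) = M (x, u)`, so the
first inequality is the contractivity of `M`. Since `‖x‖ = |z| ‖x'‖ ≤ ‖x'‖`, it leaves
`‖D u + C x‖ ≤ ‖u‖`, and `D u + C x = D u + z C x' = F(z) u`. -/

section

variable {𝕜 X U Y : Type*} [NontriviallyNormedField 𝕜]
  [NormedAddCommGroup X] [NormedSpace 𝕜 X] [NormedAddCommGroup U] [NormedSpace 𝕜 U]
  [NormedAddCommGroup Y] [NormedSpace 𝕜 Y]

theorem ContinuousLinearMap.apply_eq_add_of_one_sub_smul_comp_eq_one {A G : X →L[𝕜] X} {z : 𝕜}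
    (hG : (1 - z • A) ∘L G = 1) (v : X) : G v = A (z • G v) + v := by
  have hv : G v - z • A (G v) = v := by simpa using congr($hG v)
  rw [map_smul, add_comm]
  exact sub_eq_iff_eq_add.mp hv

theorem sq_norm_add_le_sq_norm_of_contraction {A : X →L[𝕜] X} {B : U →L[𝕜] X}
    {C : X →L[𝕜] Y} {D : U →L[𝕜] Y}
    (hM : ∀ x u, ‖A x + B u‖ ^ 2 + ‖C x + D u‖ ^ 2 ≤ ‖x‖ ^ 2 + ‖u‖ ^ 2)
    {x x' : X} {u : U} (hx' : x' = A x + B u) (hx : ‖x‖ ≤ ‖x'‖) :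
    ‖C x + D u‖ ^ 2 ≤ ‖u‖ ^ 2 := by
  have hsq : ‖x‖ ^ 2 ≤ ‖x'‖ ^ 2 := pow_le_pow_left₀ (norm_nonneg x) hx 2
  have := hM x u
  rw [← hx'] at this
  linarith

end

theorem stmt1_general
    {X U Y : Type*}
    [NormedAddCommGroup X] [InnerProductSpace ℂ X]
    [NormedAddCommGroup U] [InnerProductSpace ℂ U]
    [NormedAddCommGroup Y] [InnerProductSpace ℂ Y]
    (A : X →L[ℂ] X) (B : U →L[ℂ] X) (C : X →L[ℂ] Y) (D : U →L[ℂ] Y)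
    (hM : ∀ (x : X) (u : U), ‖A x + B u‖ ^ 2 + ‖C x + D u‖ ^ 2 ≤ ‖x‖ ^ 2 + ‖u‖ ^ 2)
    (z : ℂ) (hz : ‖z‖ < 1)
    (G : X →L[ℂ] X) (hG₁ : (1 - z • A) ∘L G = 1)
    (u : U) (x' x : X) (hx' : x' = G (B u)) (hx : x = z • x') :
    (‖x'‖ ^ 2 + ‖D u + C x‖ ^ 2 ≤ ‖x‖ ^ 2 + ‖u‖ ^ 2) ∧
      ‖D u + z • C x'‖ ^ 2 ≤ ‖u‖ ^ 2 := by
  have hstate : x' = A x + B u := by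
    rw [hx, hx']
    exact ContinuousLinearMap.apply_eq_add_of_one_sub_smul_comp_eq_one hG₁ (B u)
  have hshrink : ‖x‖ ≤ ‖x'‖ := by
    rw [hx, norm_smul]
    exact mul_le_of_le_one_left (norm_nonneg x') hz.le
  refine ⟨?_, ?_⟩
  · rw [add_comm (D u), hstate]
    exact hM x u
  · rw [← map_smul, ← hx, add_comm]
    exact sq_norm_add_le_sq_norm_of_contraction hM hstate hshrink

/-- Feedback-system inequality: if the block operator `[[A,B],[C,D]]` is a contraction
(spatially), `|z| < 1`, `G` is the bounded inverse of `I - zA`, `x' = G(Bu)` and `x = z x'`,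
then `‖x'‖² + ‖Du + Cx‖² ≤ ‖x‖² + ‖u‖²`, and consequently `‖F(z)u‖² ≤ ‖u‖²` where
`F(z)u = Du + zC x'`. -/
theorem stmt1
    {X U Y : Type*}
    [NormedAddCommGroup X] [InnerProductSpace ℂ X] [CompleteSpace X]
    [NormedAddCommGroup U] [InnerProductSpace ℂ U] [CompleteSpace U]
    [NormedAddCommGroup Y] [InnerProductSpace ℂ Y] [CompleteSpace Y]
    (A : X →L[ℂ] X) (B : U →L[ℂ] X) (C : X →L[ℂ] Y) (D : U →L[ℂ] Y)
    (hM : ∀ (x : X) (u : U), ‖A x + B u‖ ^ 2 + ‖C x + D u‖ ^ 2 ≤ ‖x‖ ^ 2 + ‖u‖ ^ 2)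
    (z : ℂ) (hz : ‖z‖ < 1)
    (G : X →L[ℂ] X) (hG₁ : (1 - z • A) ∘L G = 1) (hG₂ : G ∘L (1 - z • A) = 1)
    (u : U) (x' x : X) (hx' : x' = G (B u)) (hx : x = z • x') :
    (‖x'‖ ^ 2 + ‖D u + C x‖ ^ 2 ≤ ‖x‖ ^ 2 + ‖u‖ ^ 2) ∧
      ‖D u + z • C x'‖ ^ 2 ≤ ‖u‖ ^ 2 :=
  stmt1_general A B C D hM z hz G hG₁ u x' x hx' hx
end

section
/- Let A : X → X be a bounded operator on a Hilbert space and H a bounded, strictly positive-definite (i.e., H ≥ δI for some δ > 0, selfadjoint and invertible) operator with A* H A ≤ H. Then the spectral radius of A is at most 1. -/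
/-!
The inequality `A*HA ≤ H` iterates to `⟨H Aⁿx, Aⁿx⟩ ≤ ⟨Hx, x⟩`, and since `H` is bounded and
coercive, the quadratic form `⟨Hx, x⟩` is comparable to `‖x‖²`. Hence the powers of `A` are
uniformly bounded, by `√(‖H‖ / δ)`. For `k` in the spectrum of `A`, `kⁿ` lies in the spectrum
of `Aⁿ`, so `‖k‖ⁿ ≤ ‖Aⁿ‖ ‖1‖` stays bounded and `‖k‖ ≤ 1`.
-/

open scoped InnerProductSpace

theorem le_one_of_forall_pow_le {x C : ℝ} (h : ∀ n : ℕ, x ^ n ≤ C) : x ≤ 1 := by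
  by_contra! hx
  obtain ⟨n, hn⟩ := pow_unbounded_of_one_lt C hx
  exact (h n).not_gt hn

theorem spectrum.spectralRadius_le_one_of_forall_norm_pow_le {𝕜 A : Type*} [NormedField 𝕜]
    [NormedRing A] [NormedAlgebra 𝕜 A] [CompleteSpace A] {a : A} {C : ℝ}
    (h : ∀ n : ℕ, ‖a ^ n‖ ≤ C) : spectralRadius 𝕜 a ≤ 1 := by
  refine iSup₂_le fun k hk => ?_
  have hk_le : ‖k‖ ≤ 1 := le_one_of_forall_pow_le fun n =>
    calc ‖k‖ ^ n = ‖k ^ n‖ := (norm_pow k n).symm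
      _ ≤ ‖a ^ n‖ * ‖(1 : A)‖ := norm_le_norm_mul_of_mem (pow_mem_pow a n hk)
      _ ≤ C * ‖(1 : A)‖ := by gcongr; exact h n
  exact_mod_cast hk_le

namespace ContinuousLinearMap

variable {𝕜 E : Type*} [RCLike 𝕜] [NormedAddCommGroup E] [InnerProductSpace 𝕜 E]

open RCLike

theorem re_inner_apply_le_norm_mul_sq (H : E →L[𝕜] E) (x : E) :
    re ⟪H x, x⟫_𝕜 ≤ ‖H‖ * ‖x‖ ^ 2 :=
  calc re ⟪H x, x⟫_𝕜 ≤ ‖H x‖ * ‖x‖ := re_inner_le_norm _ _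
    _ ≤ ‖H‖ * ‖x‖ * ‖x‖ := by gcongr; exact H.le_opNorm x
    _ = ‖H‖ * ‖x‖ ^ 2 := by ring

theorem re_inner_pow_apply_le {A H : E →L[𝕜] E}
    (hAH : ∀ x, re ⟪H (A x), A x⟫_𝕜 ≤ re ⟪H x, x⟫_𝕜) (n : ℕ) (x : E) :
    re ⟪H ((A ^ n) x), (A ^ n) x⟫_𝕜 ≤ re ⟪H x, x⟫_𝕜 := by
  induction n with
  | zero => simp
  | succ n ih =>
    rw [pow_succ']
    exact (hAH _).trans ih

theorem norm_le_of_re_inner_le {H : E →L[𝕜] E} {δ : ℝ} (hδ : 0 < δ)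
    (hH : ∀ x, δ * ‖x‖ ^ 2 ≤ re ⟪H x, x⟫_𝕜) {x y : E}
    (hxy : re ⟪H y, y⟫_𝕜 ≤ re ⟪H x, x⟫_𝕜) : ‖y‖ ≤ √(‖H‖ / δ) * ‖x‖ := by
  have hsq : ‖y‖ ^ 2 ≤ ‖H‖ / δ * ‖x‖ ^ 2 := by
    rw [div_mul_eq_mul_div, le_div_iff₀ hδ, mul_comm]
    exact (hH y).trans (hxy.trans (H.re_inner_apply_le_norm_mul_sq x))
  calc ‖y‖ ≤ √(‖H‖ / δ * ‖x‖ ^ 2) := Real.le_sqrt_of_sq_le hsq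
    _ = √(‖H‖ / δ) * ‖x‖ := by rw [Real.sqrt_mul' _ (by positivity), Real.sqrt_sq (norm_nonneg x)]

theorem norm_pow_le_of_re_inner_le {A H : E →L[𝕜] E} {δ : ℝ} (hδ : 0 < δ)
    (hH : ∀ x, δ * ‖x‖ ^ 2 ≤ re ⟪H x, x⟫_𝕜)
    (hAH : ∀ x, re ⟪H (A x), A x⟫_𝕜 ≤ re ⟪H x, x⟫_𝕜) (n : ℕ) :
    ‖A ^ n‖ ≤ √(‖H‖ / δ) :=
  opNorm_le_bound _ (Real.sqrt_nonneg _) fun x =>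
    norm_le_of_re_inner_le hδ hH (re_inner_pow_apply_le hAH n x)

end ContinuousLinearMap

theorem stmt2_general
    {X : Type*} [NormedAddCommGroup X] [InnerProductSpace ℂ X] [CompleteSpace X]
    (A H : X →L[ℂ] X)
    (δ : ℝ) (hδ : 0 < δ)
    (hpos : ∀ x : X, δ * ‖x‖ ^ 2 ≤ (inner ℂ (H x) x : ℂ).re)
    (hKYP : ∀ x : X, (inner ℂ (H (A x)) (A x) : ℂ).re ≤ (inner ℂ (H x) x : ℂ).re) :
    spectralRadius ℂ A ≤ 1 :=
  spectrum.spectralRadius_le_one_of_forall_norm_pow_le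
    (ContinuousLinearMap.norm_pow_le_of_re_inner_le hδ hpos hKYP)

/-- If `H` is a bounded, strictly positive-definite operator (selfadjoint with
`⟨Hx,x⟩ ≥ δ‖x‖²` for some `δ > 0`) satisfying `A*HA ≤ H`
(spatially: `⟨H(Ax), Ax⟩ ≤ ⟨Hx, x⟩` for all `x`), then the spectral radius of `A`
is at most `1`. -/
theorem stmt2
    {X : Type*} [NormedAddCommGroup X] [InnerProductSpace ℂ X] [CompleteSpace X]
    (A H : X →L[ℂ] X) (hH : IsSelfAdjoint H)
    (δ : ℝ) (hδ : 0 < δ)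
    (hpos : ∀ x : X, δ * ‖x‖ ^ 2 ≤ (inner ℂ (H x) x : ℂ).re)
    (hKYP : ∀ x : X, (inner ℂ (H (A x)) (A x) : ℂ).re ≤ (inner ℂ (H x) x : ℂ).re) :
    spectralRadius ℂ A ≤ 1 :=
  stmt2_general A H δ hδ hpos hKYP
end

section
/- Suppose the block operator [[A, B],[C, D]] : X ⊕ U → X ⊕ Y is a contraction. Then A* A + C* C ≤ I_X, and the observability operator W_o = col_{i≥0}[C Aⁱ] : X → ℓ²(ℕ, Y) is a well-defined contraction, i.e., Σ_{i=0}^{∞} ‖C Aⁱ x‖² ≤ ‖x‖² for all x ∈ X. -/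
/-!
Taking `u = 0` in the contraction inequality gives `‖A x‖² + ‖C x‖² ≤ ‖x‖²`. Applied to `Aⁱ x`
this says that the energy `‖Aⁱ x‖²` drops by at least `‖C Aⁱ x‖²` at each step, so telescoping
gives `∑_{i<n} ‖C Aⁱ x‖² + ‖Aⁿ x‖² ≤ ‖x‖²`; the partial sums of a nonnegative series are thus
bounded by `‖x‖²`, and so is its sum.
-/

section Observability

variable {𝕜 E F : Type*} [Semiring 𝕜] [SeminormedAddCommGroup E] [Module 𝕜 E]
  [SeminormedAddCommGroup F] [Module 𝕜 F] {A : E →L[𝕜] E} {C : E →L[𝕜] F}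

theorem sum_range_norm_sq_add_norm_pow_sq_le (hAC : ∀ x, ‖A x‖ ^ 2 + ‖C x‖ ^ 2 ≤ ‖x‖ ^ 2)
    (x : E) (n : ℕ) :
    ∑ i ∈ Finset.range n, ‖C ((A ^ i) x)‖ ^ 2 + ‖(A ^ n) x‖ ^ 2 ≤ ‖x‖ ^ 2 := by
  induction n with
  | zero => simp
  | succ n ih =>
    have step := hAC ((A ^ n) x)
    rw [Finset.sum_range_succ, pow_succ' A n, mul_apply_eq_comp]
    linarith

theorem sum_range_norm_sq_le (hAC : ∀ x, ‖A x‖ ^ 2 + ‖C x‖ ^ 2 ≤ ‖x‖ ^ 2) (x : E) (n : ℕ) :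
    ∑ i ∈ Finset.range n, ‖C ((A ^ i) x)‖ ^ 2 ≤ ‖x‖ ^ 2 := by
  linarith [sum_range_norm_sq_add_norm_pow_sq_le hAC x n, sq_nonneg ‖(A ^ n) x‖]

theorem exists_hasSum_norm_sq_le (hAC : ∀ x, ‖A x‖ ^ 2 + ‖C x‖ ^ 2 ≤ ‖x‖ ^ 2) (x : E) :
    ∃ s : ℝ, HasSum (fun i : ℕ => ‖C ((A ^ i) x)‖ ^ 2) s ∧ s ≤ ‖x‖ ^ 2 := by
  have hsum : Summable fun i : ℕ => ‖C ((A ^ i) x)‖ ^ 2 :=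
    summable_of_sum_range_le (fun _ => sq_nonneg _) (sum_range_norm_sq_le hAC x)
  exact ⟨_, hsum.hasSum, hsum.tsum_le_of_sum_range_le (sum_range_norm_sq_le hAC x)⟩

end Observability

theorem stmt12_general
    {X U Y : Type*}
    [NormedAddCommGroup X] [InnerProductSpace ℂ X]
    [NormedAddCommGroup U] [InnerProductSpace ℂ U]
    [NormedAddCommGroup Y] [InnerProductSpace ℂ Y]
    (A : X →L[ℂ] X) (B : U →L[ℂ] X) (C : X →L[ℂ] Y) (D : U →L[ℂ] Y)
    (hM : ∀ (x : X) (u : U), ‖A x + B u‖ ^ 2 + ‖C x + D u‖ ^ 2 ≤ ‖x‖ ^ 2 + ‖u‖ ^ 2) :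
    (∀ x : X, ‖A x‖ ^ 2 + ‖C x‖ ^ 2 ≤ ‖x‖ ^ 2) ∧
    (∀ x : X, ∃ s : ℝ, HasSum (fun i : ℕ => ‖C ((A ^ i) x)‖ ^ 2) s ∧ s ≤ ‖x‖ ^ 2) := by
  have hAC : ∀ x : X, ‖A x‖ ^ 2 + ‖C x‖ ^ 2 ≤ ‖x‖ ^ 2 := fun x => by simpa using hM x 0
  exact ⟨hAC, exists_hasSum_norm_sq_le hAC⟩

/-- If the block operator `[[A,B],[C,D]]` is a contraction (spatially), then
`A*A + C*C ≤ I` (spatially `‖Ax‖² + ‖Cx‖² ≤ ‖x‖²`) and the observability operator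
`W_o = col_{i≥0}[CAⁱ]` is a well-defined contraction from `X` to `ℓ²(ℕ,Y)`:
`Σᵢ ‖CAⁱx‖² ≤ ‖x‖²` for all `x`. -/
theorem stmt12
    {X U Y : Type*}
    [NormedAddCommGroup X] [InnerProductSpace ℂ X] [CompleteSpace X]
    [NormedAddCommGroup U] [InnerProductSpace ℂ U] [CompleteSpace U]
    [NormedAddCommGroup Y] [InnerProductSpace ℂ Y] [CompleteSpace Y]
    (A : X →L[ℂ] X) (B : U →L[ℂ] X) (C : X →L[ℂ] Y) (D : U →L[ℂ] Y)
    (hM : ∀ (x : X) (u : U), ‖A x + B u‖ ^ 2 + ‖C x + D u‖ ^ 2 ≤ ‖x‖ ^ 2 + ‖u‖ ^ 2) :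
    (∀ x : X, ‖A x‖ ^ 2 + ‖C x‖ ^ 2 ≤ ‖x‖ ^ 2) ∧
    (∀ x : X, ∃ s : ℝ, HasSum (fun i : ℕ => ‖C ((A ^ i) x)‖ ^ 2) s ∧ s ≤ ‖x‖ ^ 2) :=
  stmt12_general A B C D hM
end

section
/- Let S : ℓ²(ℕ) → ℓ²(ℕ) be the unilateral forward shift, A = S, and B : ℂ → ℓ²(ℕ) the injection onto the first coordinate. Then the adjoint controllability operator W_c* (defined via x ↦ (B* A*^{(-n-1)} x)_{n ≤ -1}) is the identity operator of ℓ²(ℕ) (up to the canonical identification of ℓ²(ℤ₋, ℂ) with ℓ²(ℕ)), hence W_c is bounded and surjective, yet the reachability space span{Im Aᵏ B : k ≥ 0} equals the finitely supported sequences, which is a proper dense subspace of ℓ²(ℕ). Thus (A,B) is ℓ²-exactly controllable but not exactly controllable. -/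
open ContinuousLinearMap

/-!
The reachable vectors `Sᵏ (B c)` are exactly the multiples `c • eₖ` of the standard basis
vectors, so the reachability space is the span of the `eₖ`, i.e. the finitely supported
sequences. It is dense because the partial sums of `∑ xₖ eₖ` converge to `x` in `ℓ²`, and
proper because `((1/2)ⁿ)ₙ ∈ ℓ²` has infinite support. On the other hand `S*` is the backward
shift and `B*` reads off the coordinate `0`, so `B* S*ⁿ x = xₙ`.
-/

namespace lp

section FiniteSupport

variable {𝕜 α : Type*} {E : α → Type*} {p : ENNReal} [NormedRing 𝕜]
  [∀ i, NormedAddCommGroup (E i)] [∀ i, Module 𝕜 (E i)] [∀ i, IsBoundedSMul 𝕜 (E i)]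

variable (𝕜 E p) in
def finiteSupport : Submodule 𝕜 (lp E p) where
  carrier := {f | Memℓp (⇑f) 0}
  add_mem' := Memℓp.add
  zero_mem' := zero_memℓp
  smul_mem' c _ hf := hf.const_smul c

theorem mem_finiteSupport_iff {f : lp E p} :
    f ∈ finiteSupport 𝕜 E p ↔ {i | f i ≠ 0}.Finite :=
  memℓp_zero_iff

variable [DecidableEq α]

theorem single_mem_finiteSupport (i : α) (a : E i) : lp.single p i a ∈ finiteSupport 𝕜 E p :=
  (lp.single 0 i a).2

theorem eq_sum_single_of_finite_support {f : lp E p} (hf : {i | f i ≠ 0}.Finite) :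
    f = ∑ i ∈ hf.toFinset, lp.single p i (f i) := by
  ext i
  rw [lp.coeFn_sum, Finset.sum_apply]
  simp only [lp.coeFn_single, Finset.sum_pi_single]
  by_cases hi : f i = 0 <;> simp [hi]

theorem span_single_eq_finiteSupport :
    Submodule.span 𝕜 {v : lp E p | ∃ i a, v = lp.single p i a} = finiteSupport 𝕜 E p := by
  refine le_antisymm (Submodule.span_le.2 ?_) fun f hf => ?_
  · rintro _ ⟨i, a, rfl⟩
    exact single_mem_finiteSupport i a
  · rw [eq_sum_single_of_finite_support (mem_finiteSupport_iff.1 hf)]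
    exact Submodule.sum_mem _ fun i _ => Submodule.subset_span ⟨i, f i, rfl⟩

theorem dense_finiteSupport [Fact (1 ≤ p)] (hp : p ≠ ⊤) :
    Dense (finiteSupport 𝕜 E p : Set (lp E p)) := fun f =>
  mem_closure_of_tendsto (lp.hasSum_single hp f) <| .of_forall fun _ =>
    Submodule.sum_mem _ fun i _ => single_mem_finiteSupport i (f i)

end FiniteSupport

theorem finiteSupport_ne_top {𝕜 : Type*} [RCLike 𝕜] {p : ENNReal} [Fact (1 ≤ p)] :
    finiteSupport 𝕜 (fun _ : ℕ => 𝕜) p ≠ ⊤ := by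
  have hgeom : Memℓp (fun n : ℕ => (2⁻¹ : 𝕜) ^ n) p :=
    (memℓp_gen (by simpa using summable_geometric_two)).of_exponent_ge (Fact.out : 1 ≤ p)
  have hinfinite : (⟨_, hgeom⟩ : lp _ p) ∉ finiteSupport 𝕜 (fun _ : ℕ => 𝕜) p := by
    simp [mem_finiteSupport_iff, Set.infinite_univ]
  exact fun htop => hinfinite (Submodule.eq_top_iff'.1 htop _)

end lp

local notation "ℓ²[" 𝕜 "]" => lp (fun _ : ℕ => 𝕜) 2

variable {𝕜 : Type*} [RCLike 𝕜]

theorem lp.apply_eq_inner_single (f : ℓ²[𝕜]) (n : ℕ) :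
    f n = inner 𝕜 (lp.single 2 n (1 : 𝕜)) f := by
  simp [lp.inner_single_left]

def IsForwardShift (S : ℓ²[𝕜] →L[𝕜] ℓ²[𝕜]) : Prop :=
  ∀ x : ℓ²[𝕜], S x 0 = 0 ∧ ∀ n : ℕ, S x (n + 1) = x n

def IsFirstCoordinateEmbedding (B : 𝕜 →L[𝕜] ℓ²[𝕜]) : Prop :=
  ∀ c : 𝕜, B c 0 = c ∧ ∀ n : ℕ, B c (n + 1) = 0

namespace IsForwardShift

variable {S : ℓ²[𝕜] →L[𝕜] ℓ²[𝕜]}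

theorem apply_single (hS : IsForwardShift S) (k : ℕ) (c : 𝕜) :
    S (lp.single 2 k c) = lp.single 2 (k + 1) c := by
  ext (_ | m)
  · simp [(hS _).1]
  · simp [(hS _).2, Pi.single_apply]

theorem pow_apply_single (hS : IsForwardShift S) (n k : ℕ) (c : 𝕜) :
    (S ^ n) (lp.single 2 k c) = lp.single 2 (k + n) c := by
  induction n with
  | zero => rfl
  | succ n ih => rw [pow_succ', mul_apply_eq_comp, ih, hS.apply_single, add_assoc]

theorem adjoint_apply (hS : IsForwardShift S) (y : ℓ²[𝕜]) (n : ℕ) :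
    adjoint S y n = y (n + 1) := by
  rw [lp.apply_eq_inner_single, adjoint_inner_right, hS.apply_single,
    ← lp.apply_eq_inner_single]

theorem adjoint_pow_apply (hS : IsForwardShift S) (y : ℓ²[𝕜]) (n m : ℕ) :
    (adjoint S ^ n) y m = y (m + n) := by
  induction n generalizing m with
  | zero => rfl
  | succ n ih =>
    rw [pow_succ', mul_apply_eq_comp, hS.adjoint_apply, ih, add_right_comm, add_assoc]

end IsForwardShift

namespace IsFirstCoordinateEmbedding

variable {B : 𝕜 →L[𝕜] ℓ²[𝕜]}

theorem apply_eq_single (hB : IsFirstCoordinateEmbedding B) (c : 𝕜) :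
    B c = lp.single 2 0 c := by
  ext (_ | m)
  · simp [(hB c).1]
  · simp [(hB c).2]

theorem adjoint_apply (hB : IsFirstCoordinateEmbedding B) (y : ℓ²[𝕜]) :
    adjoint B y = y 0 := by
  have h := adjoint_inner_right B 1 y
  rwa [hB.apply_eq_single, ← lp.apply_eq_inner_single, RCLike.inner_apply, map_one,
    mul_one] at h

end IsFirstCoordinateEmbedding

/-- For the unilateral forward shift `A = S` on `ℓ²(ℕ)` and `B : ℂ → ℓ²(ℕ)` the injection
onto the first coordinate, the adjoint controllability operator
`W_c* : x ↦ (B* A*^{-n-1} x)_{n≤-1}` is (under the identification `ℤ₋ ≅ ℕ`, `j ↦ -j-1`)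
the identity of `ℓ²(ℕ)`; hence `W_c` is bounded and surjective (so `(A,B)` is ℓ²-exactly
controllable), yet the reachability space `span{Im AᵏB : k ≥ 0}` equals the set of finitely
supported sequences, a dense proper subspace of `ℓ²(ℕ)` (so `(A,B)` is not exactly
controllable). -/
theorem stmt13
    (S : lp (fun _ : ℕ => ℂ) 2 →L[ℂ] lp (fun _ : ℕ => ℂ) 2)
    (hS : ∀ x : lp (fun _ : ℕ => ℂ) 2, S x 0 = 0 ∧ ∀ n : ℕ, S x (n + 1) = x n)
    (B : ℂ →L[ℂ] lp (fun _ : ℕ => ℂ) 2)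
    (hB : ∀ c : ℂ, B c 0 = c ∧ ∀ n : ℕ, B c (n + 1) = 0) :
    (∀ (x : lp (fun _ : ℕ => ℂ) 2) (n : ℕ), (adjoint B) (((adjoint S) ^ n) x) = x n) ∧
    ((Submodule.span ℂ {v : lp (fun _ : ℕ => ℂ) 2 | ∃ (k : ℕ) (c : ℂ), v = (S ^ k) (B c)} :
        Set (lp (fun _ : ℕ => ℂ) 2)) =
      {f : lp (fun _ : ℕ => ℂ) 2 | (Function.support fun n : ℕ => f n).Finite}) ∧
    Dense (Submodule.span ℂ
      {v : lp (fun _ : ℕ => ℂ) 2 | ∃ (k : ℕ) (c : ℂ), v = (S ^ k) (B c)} :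
        Set (lp (fun _ : ℕ => ℂ) 2)) ∧
    (Submodule.span ℂ {v : lp (fun _ : ℕ => ℂ) 2 | ∃ (k : ℕ) (c : ℂ), v = (S ^ k) (B c)} :
        Set (lp (fun _ : ℕ => ℂ) 2)) ≠ Set.univ := by
  have hreach : {v : lp (fun _ : ℕ => ℂ) 2 | ∃ (k : ℕ) (c : ℂ), v = (S ^ k) (B c)} =
      {v | ∃ k c, v = lp.single 2 k c} := by
    simp_rw [IsFirstCoordinateEmbedding.apply_eq_single hB,
      IsForwardShift.pow_apply_single hS, zero_add]
  rw [hreach, lp.span_single_eq_finiteSupport]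
  refine ⟨fun x n => ?_, Set.ext fun _ => lp.mem_finiteSupport_iff,
    lp.dense_finiteSupport ENNReal.ofNat_ne_top, ?_⟩
  · rw [IsFirstCoordinateEmbedding.adjoint_apply hB, IsForwardShift.adjoint_pow_apply hS,
      zero_add]
  · simpa using lp.finiteSupport_ne_top
end

section
/- Let (A, B) be an input pair of bounded Hilbert space operators such that the adjoint controllability operator W_c* has dense domain and its adjoint W_c (the controllability operator) is everywhere defined and surjective. Then (A, B) is approximately controllable, i.e., span{Im Aᵏ B : k ≥ 0} is dense in X. (Key step: each W_c u is a weak limit of finite sums Σ_{k=-K}^{-1} A^{-k-1} B u(k), and since weak and norm closures of a subspace coincide, Im W_c is contained in the norm closure of the reachability space.) -/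
/-!
A vector orthogonal to every `Aᵏ B u` satisfies `B* A*ᵏ x = 0` for all `k`, so it lies in
`ker W_c* = (range W_c)ᗮ`, which is `0` because `W_c` is surjective.
-/

open ContinuousLinearMap

namespace ContinuousLinearMap

variable {𝕜 E F : Type*} [RCLike 𝕜]
  [NormedAddCommGroup E] [InnerProductSpace 𝕜 E] [CompleteSpace E]
  [NormedAddCommGroup F] [InnerProductSpace 𝕜 F] [CompleteSpace F]

theorem ker_eq_bot_of_surjective_adjoint {T : E →L[𝕜] F} (hT : Function.Surjective (adjoint T)) :
    T.ker = ⊥ := by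
  rw [← adjoint_adjoint T, ← orthogonal_range, LinearMap.range_eq_top.mpr hT,
    Submodule.top_orthogonal_eq_bot]

theorem adjoint_apply_adjoint_pow_apply_eq_zero_of_mem_orthogonal {A : E →L[𝕜] E} {B : F →L[𝕜] E}
    {x : E} (hx : x ∈ (Submodule.span 𝕜 {v : E | ∃ (k : ℕ) (u : F), v = (A ^ k) (B u)})ᗮ)
    (n : ℕ) : adjoint B ((adjoint A ^ n) x) = 0 := by
  refine ext_inner_left 𝕜 fun u => ?_
  rw [inner_zero_right, adjoint_inner_right, ← star_eq_adjoint, ← star_pow, star_eq_adjoint,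
    adjoint_inner_right]
  exact hx _ (Submodule.subset_span ⟨n, u, rfl⟩)

end ContinuousLinearMap

/-- Suppose the adjoint controllability operator `W_c*` of the input pair `(A,B)` is
everywhere defined (hence a bounded operator `Wcs : X → ℓ²(ℕ,U)`, indexing `ℤ₋` by
`n = -j-1 ∈ ℕ`, so `Wcs x = (B* A*ⁿ x)ₙ`) and its adjoint `W_c = Wcs*` is surjective.
Then `(A,B)` is approximately controllable: `span{Im AᵏB : k ≥ 0}` is dense in `X`. -/
theorem stmt14
    {X U : Type*}
    [NormedAddCommGroup X] [InnerProductSpace ℂ X] [CompleteSpace X]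
    [NormedAddCommGroup U] [InnerProductSpace ℂ U] [CompleteSpace U]
    (A : X →L[ℂ] X) (B : U →L[ℂ] X)
    (Wcs : X →L[ℂ] lp (fun _ : ℕ => U) 2)
    (hWcs : ∀ (x : X) (n : ℕ), Wcs x n = (adjoint B) (((adjoint A) ^ n) x))
    (hsurj : Function.Surjective (adjoint Wcs)) :
    Dense (Submodule.span ℂ {v : X | ∃ (k : ℕ) (u : U), v = (A ^ k) (B u)} : Set X) := by
  rw [Submodule.dense_iff_topologicalClosure_eq_top, Submodule.topologicalClosure_eq_top_iff,
    eq_bot_iff, ← ker_eq_bot_of_surjective_adjoint hsurj]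
  intro x hx
  rw [LinearMap.mem_ker, coe_coe]
  refine lp.ext (funext fun n => ?_)
  rw [hWcs, adjoint_apply_adjoint_pow_apply_eq_zero_of_mem_orthogonal hx, lp.coeFn_zero,
    Pi.zero_apply]
end

section
/- Let Σ and Σ' be systems with bounded operators (A,B,C,D) on state space X and (A',B',C',D') on X', and suppose Γ : X → X' is a closed, densely defined, injective operator with dense range implementing a pseudo-similarity: D' = D, A D(Γ) ⊆ D(Γ), Γ A x = A' Γ x for x ∈ D(Γ), B U ⊆ D(Γ), Γ B = B', and C x = C' Γ x for x ∈ D(Γ). Then D' = D and C' A'ⁿ B' = C Aⁿ B for all n ≥ 0; hence the transfer functions F_Σ(z) = D + zC(I-zA)⁻¹B and F_{Σ'}(z) = D' + zC'(I-zA')⁻¹B' agree on a neighborhood of 0. -/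
/-!
The intertwining relations propagate along the orbit: `AⁿBu` stays in the domain of `Γ` and
`Γ (AⁿBu) = A'ⁿB'u`, so `CAⁿBu = C'Γ(AⁿBu) = C'A'ⁿB'u`. For `‖z‖` small both resolvents are
Neumann series, so the transfer functions are the same power series in `z`.
-/

open ContinuousLinearMap

namespace LinearPMap

variable {R E F : Type*} [Ring R] [AddCommGroup E] [Module R E] [TopologicalSpace E]
  [AddCommGroup F] [Module R F] [TopologicalSpace F]

theorem exists_pow_apply_mem_domain_of_intertwines (Γ : E →ₗ.[R] F) {A : E →L[R] E}
    {A' : F →L[R] F} (hA : ∀ x : Γ.domain, ∃ h : A (x : E) ∈ Γ.domain, Γ ⟨A x, h⟩ = A' (Γ x))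
    (n : ℕ) (x : Γ.domain) :
    ∃ h : (A ^ n) (x : E) ∈ Γ.domain, Γ ⟨(A ^ n) x, h⟩ = (A' ^ n) (Γ x) := by
  induction n with
  | zero => exact ⟨x.2, rfl⟩
  | succ n ih =>
    obtain ⟨hmem, heq⟩ := ih
    obtain ⟨hmem', heq'⟩ := hA ⟨(A ^ n) x, hmem⟩
    rw [pow_succ', pow_succ']
    exact ⟨hmem', by simpa [← heq] using heq'⟩

end LinearPMap

theorem norm_smul_lt_one_of_norm_lt_inv {𝕜 V : Type*} [NormedField 𝕜] [SeminormedAddCommGroup V]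
    [NormedSpace 𝕜 V] (a : V) {z : 𝕜} (hz : ‖z‖ < (‖a‖ + 1)⁻¹) : ‖z • a‖ < 1 := by
  have hpos : 0 < ‖a‖ + 1 := by positivity
  calc ‖z • a‖ = ‖z‖ * ‖a‖ := norm_smul z a
    _ ≤ ‖z‖ * (‖a‖ + 1) := by gcongr; linarith
    _ < 1 := (lt_inv_mul_iff₀' hpos).mp (by simpa using hz)

section NeumannSeries

variable {𝕜 E U Y : Type*} [NontriviallyNormedField 𝕜]
  [NormedAddCommGroup E] [NormedSpace 𝕜 E] [CompleteSpace E]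
  [NormedAddCommGroup U] [NormedSpace 𝕜 U] [NormedAddCommGroup Y] [NormedSpace 𝕜 Y]

theorem ContinuousLinearMap.eq_tsum_pow_of_one_sub_comp_eq_one {T G : E →L[𝕜] E}
    (hT : ‖T‖ < 1) (hG : (1 - T) ∘L G = 1) : G = ∑' n : ℕ, T ^ n := by
  calc G = ((∑' n : ℕ, T ^ n) * (1 - T)) * G := by rw [geom_series_mul_neg T hT, one_mul]
    _ = ∑' n : ℕ, T ^ n := by rw [mul_assoc, show (1 - T) * G = 1 from hG, mul_one]

theorem ContinuousLinearMap.apply_comp_eq_tsum_of_one_sub_smul_comp_eq_one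
    (A : E →L[𝕜] E) (B : U →L[𝕜] E) (C : E →L[𝕜] Y) {z : 𝕜} (hz : ‖z • A‖ < 1)
    {G : E →L[𝕜] E} (hG : (1 - z • A) ∘L G = 1) (u : U) :
    C (G (B u)) = ∑' n : ℕ, z ^ n • C ((A ^ n) (B u)) := by
  have hgeom := summable_geometric_of_norm_lt_one hz
  have happly : (∑' n : ℕ, (z • A) ^ n) (B u) = ∑' n : ℕ, ((z • A) ^ n) (B u) :=
    (apply 𝕜 E (B u)).map_tsum hgeom
  have hsum : Summable fun n : ℕ => ((z • A) ^ n) (B u) :=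
    hgeom.map (apply 𝕜 E (B u)) (apply 𝕜 E (B u)).continuous
  rw [eq_tsum_pow_of_one_sub_comp_eq_one hz hG, happly, C.map_tsum hsum]
  simp [smul_pow]

end NeumannSeries

theorem stmt16_general
    {X X' U Y : Type*}
    [NormedAddCommGroup X] [InnerProductSpace ℂ X] [CompleteSpace X]
    [NormedAddCommGroup X'] [InnerProductSpace ℂ X'] [CompleteSpace X']
    [NormedAddCommGroup U] [InnerProductSpace ℂ U]
    [NormedAddCommGroup Y] [InnerProductSpace ℂ Y]
    (A : X →L[ℂ] X) (B : U →L[ℂ] X) (C : X →L[ℂ] Y) (D : U →L[ℂ] Y)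
    (A' : X' →L[ℂ] X') (B' : U →L[ℂ] X') (C' : X' →L[ℂ] Y) (D' : U →L[ℂ] Y)
    (Γ : X →ₗ.[ℂ] X')
    (hD : D' = D)
    (hA : ∀ x : Γ.domain, ∃ h : A (x : X) ∈ Γ.domain, Γ ⟨A (x : X), h⟩ = A' (Γ x))
    (hB : ∀ u : U, ∃ h : B u ∈ Γ.domain, Γ ⟨B u, h⟩ = B' u)
    (hC : ∀ x : Γ.domain, C (x : X) = C' (Γ x)) :
    D' = D ∧
    (∀ (n : ℕ) (u : U), C' ((A' ^ n) (B' u)) = C ((A ^ n) (B u))) ∧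
    (∃ r : ℝ, 0 < r ∧ ∀ z : ℂ, ‖z‖ < r →
      ∀ (G : X →L[ℂ] X) (G' : X' →L[ℂ] X'),
        ((1 - z • A) ∘L G = 1 ∧ G ∘L (1 - z • A) = 1) →
        ((1 - z • A') ∘L G' = 1 ∧ G' ∘L (1 - z • A') = 1) →
        ∀ u : U, D u + z • C (G (B u)) = D' u + z • C' (G' (B' u))) := by
  have hcoeff : ∀ (n : ℕ) (u : U), C' ((A' ^ n) (B' u)) = C ((A ^ n) (B u)) := by
    intro n u
    obtain ⟨hBu, hΓB⟩ := hB u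
    obtain ⟨hmem, hΓ⟩ := Γ.exists_pow_apply_mem_domain_of_intertwines hA n ⟨B u, hBu⟩
    rw [hC ⟨_, hmem⟩, hΓ, hΓB]
  refine ⟨hD, hcoeff, min (‖A‖ + 1)⁻¹ (‖A'‖ + 1)⁻¹, by positivity, ?_⟩
  intro z hz G G' hG hG' u
  rw [hD, apply_comp_eq_tsum_of_one_sub_smul_comp_eq_one A B C
      (norm_smul_lt_one_of_norm_lt_inv A (hz.trans_le (min_le_left _ _))) hG.1,
    apply_comp_eq_tsum_of_one_sub_smul_comp_eq_one A' B' C'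
      (norm_smul_lt_one_of_norm_lt_inv A' (hz.trans_le (min_le_right _ _))) hG'.1]
  simp only [hcoeff]

/-- If `Γ` is a closed, densely defined, injective operator with dense range implementing a
pseudo-similarity between the systems `(A,B,C,D)` and `(A',B',C',D')`, then `D' = D` and
`C'A'ⁿB' = CAⁿB` for all `n ≥ 0`; hence the transfer functions
`F(z) = D + zC(I-zA)⁻¹B` and `F'(z) = D' + zC'(I-zA')⁻¹B'` agree on a neighborhood of `0`. -/
theorem stmt16
    {X X' U Y : Type*}
    [NormedAddCommGroup X] [InnerProductSpace ℂ X] [CompleteSpace X]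
    [NormedAddCommGroup X'] [InnerProductSpace ℂ X'] [CompleteSpace X']
    [NormedAddCommGroup U] [InnerProductSpace ℂ U] [CompleteSpace U]
    [NormedAddCommGroup Y] [InnerProductSpace ℂ Y] [CompleteSpace Y]
    (A : X →L[ℂ] X) (B : U →L[ℂ] X) (C : X →L[ℂ] Y) (D : U →L[ℂ] Y)
    (A' : X' →L[ℂ] X') (B' : U →L[ℂ] X') (C' : X' →L[ℂ] Y) (D' : U →L[ℂ] Y)
    (Γ : X →ₗ.[ℂ] X')
    (hdom : Dense (Γ.domain : Set X))
    (hran : Dense (Set.range Γ.toFun : Set X'))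
    (hinj : ∀ x : Γ.domain, Γ x = 0 → (x : X) = 0)
    (hclosed : IsClosed (Γ.graph : Set (X × X')))
    (hD : D' = D)
    (hA : ∀ x : Γ.domain, ∃ h : A (x : X) ∈ Γ.domain, Γ ⟨A (x : X), h⟩ = A' (Γ x))
    (hB : ∀ u : U, ∃ h : B u ∈ Γ.domain, Γ ⟨B u, h⟩ = B' u)
    (hC : ∀ x : Γ.domain, C (x : X) = C' (Γ x)) :
    D' = D ∧
    (∀ (n : ℕ) (u : U), C' ((A' ^ n) (B' u)) = C ((A ^ n) (B u))) ∧
    (∃ r : ℝ, 0 < r ∧ ∀ z : ℂ, ‖z‖ < r →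
      ∀ (G : X →L[ℂ] X) (G' : X' →L[ℂ] X'),
        ((1 - z • A) ∘L G = 1 ∧ G ∘L (1 - z • A) = 1) →
        ((1 - z • A') ∘L G' = 1 ∧ G' ∘L (1 - z • A') = 1) →
        ∀ u : U, D u + z • C (G (B u)) = D' u + z • C' (G' (B' u))) :=
  stmt16_general A B C D A' B' C' D' Γ hD hA hB hC
end

section
/- Let Σ ~ (A,B,C,D) and Σ' ~ (A',B',C',D') be systems with C' A'ⁿ B' = C Aⁿ B for all n ≥ 0 and D = D'. Suppose (C', A') is observable (∩ₙ ker(C' A'ⁿ) = {0}). Then the map Γ₀ sending Σ_{k=0}^{n} Aᵏ B u_k ↦ Σ_{k=0}^{n} A'ᵏ B' u_k is well defined on the reachability space Rea(A|B) = span{Aᵏ B u : k ≥ 0, u ∈ U}; i.e., if Σ_{k=0}^{n} Aᵏ B u_k = 0 then Σ_{k=0}^{n} A'ᵏ B' u_k = 0. If moreover (C, A) is observable, then Γ₀ is injective. -/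
/-!
Applying `C Aⁿ` to `Σₖ AᵏBuₖ` gives `Σₖ CAⁿ⁺ᵏBuₖ`, which by the moment conditions equals
`C'A'ⁿ` applied to `Σₖ A'ᵏB'uₖ`. So if one of the two sums vanishes, the other lies in the
unobservable subspace `⋂ₙ ker(C'A'ⁿ)` (resp. `⋂ₙ ker(CAⁿ)`), which is trivial by observability.
-/

section Reachability

variable {R X U Y : Type*} [Semiring R]
  [TopologicalSpace X] [AddCommMonoid X] [Module R X]
  [TopologicalSpace U] [AddCommMonoid U] [Module R U]
  [TopologicalSpace Y] [AddCommMonoid Y] [Module R Y]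

theorem apply_pow_reachable_sum (A : X →L[R] X) (B : U →L[R] X) (C : X →L[R] Y)
    (u : ℕ →₀ U) (n : ℕ) :
    C ((A ^ n) (∑ k ∈ u.support, (A ^ k) (B (u k)))) =
      ∑ k ∈ u.support, C ((A ^ (n + k)) (B (u k))) := by
  simp only [map_sum, pow_add, mul_apply_eq_comp]

variable {X' : Type*} [TopologicalSpace X'] [AddCommMonoid X'] [Module R X']

theorem reachable_sum_eq_zero_of_moments_eq
    {A : X →L[R] X} {B : U →L[R] X} {C : X →L[R] Y}
    {A' : X' →L[R] X'} {B' : U →L[R] X'} {C' : X' →L[R] Y}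
    (hmom : ∀ (n : ℕ) (u : U), C' ((A' ^ n) (B' u)) = C ((A ^ n) (B u)))
    (hobs' : ∀ x' : X', (∀ n : ℕ, C' ((A' ^ n) x') = 0) → x' = 0)
    {u : ℕ →₀ U} (h : ∑ k ∈ u.support, (A ^ k) (B (u k)) = 0) :
    ∑ k ∈ u.support, (A' ^ k) (B' (u k)) = 0 := by
  refine hobs' _ fun n => ?_
  calc C' ((A' ^ n) (∑ k ∈ u.support, (A' ^ k) (B' (u k))))
      = C ((A ^ n) (∑ k ∈ u.support, (A ^ k) (B (u k)))) := by
        simp only [apply_pow_reachable_sum, hmom]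
    _ = 0 := by rw [h, map_zero, map_zero]

end Reachability

theorem stmt17_general
    {X X' U Y : Type*}
    [NormedAddCommGroup X] [InnerProductSpace ℂ X]
    [NormedAddCommGroup X'] [InnerProductSpace ℂ X']
    [NormedAddCommGroup U] [InnerProductSpace ℂ U]
    [NormedAddCommGroup Y] [InnerProductSpace ℂ Y]
    (A : X →L[ℂ] X) (B : U →L[ℂ] X) (C : X →L[ℂ] Y)
    (A' : X' →L[ℂ] X') (B' : U →L[ℂ] X') (C' : X' →L[ℂ] Y)
    (hmom : ∀ (n : ℕ) (u : U), C' ((A' ^ n) (B' u)) = C ((A ^ n) (B u)))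
    (hobs' : ∀ x' : X', (∀ n : ℕ, C' ((A' ^ n) x') = 0) → x' = 0) :
    (∀ u : ℕ →₀ U,
      (∑ k ∈ u.support, (A ^ k) (B (u k))) = 0 →
        (∑ k ∈ u.support, (A' ^ k) (B' (u k))) = 0) ∧
    ((∀ x : X, (∀ n : ℕ, C ((A ^ n) x) = 0) → x = 0) →
      ∀ u : ℕ →₀ U,
        (∑ k ∈ u.support, (A' ^ k) (B' (u k))) = 0 →
          (∑ k ∈ u.support, (A ^ k) (B (u k))) = 0) :=
  ⟨fun _ => reachable_sum_eq_zero_of_moments_eq hmom hobs',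
    fun hobs _ => reachable_sum_eq_zero_of_moments_eq (fun n u => (hmom n u).symm) hobs⟩

/-- Suppose `C'A'ⁿB' = CAⁿB` for all `n ≥ 0` and `D = D'`, and `(C',A')` is observable.
Then the map `Γ₀ : Σₖ AᵏBuₖ ↦ Σₖ A'ᵏB'uₖ` is well defined on the reachability space:
`Σₖ AᵏBuₖ = 0` implies `Σₖ A'ᵏB'uₖ = 0`. If moreover `(C,A)` is observable, then `Γ₀`
is injective: `Σₖ A'ᵏB'uₖ = 0` implies `Σₖ AᵏBuₖ = 0`. -/
theorem stmt17
    {X X' U Y : Type*}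
    [NormedAddCommGroup X] [InnerProductSpace ℂ X] [CompleteSpace X]
    [NormedAddCommGroup X'] [InnerProductSpace ℂ X'] [CompleteSpace X']
    [NormedAddCommGroup U] [InnerProductSpace ℂ U] [CompleteSpace U]
    [NormedAddCommGroup Y] [InnerProductSpace ℂ Y] [CompleteSpace Y]
    (A : X →L[ℂ] X) (B : U →L[ℂ] X) (C : X →L[ℂ] Y) (D : U →L[ℂ] Y)
    (A' : X' →L[ℂ] X') (B' : U →L[ℂ] X') (C' : X' →L[ℂ] Y) (D' : U →L[ℂ] Y)
    (hD : D = D')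
    (hmom : ∀ (n : ℕ) (u : U), C' ((A' ^ n) (B' u)) = C ((A ^ n) (B u)))
    (hobs' : ∀ x' : X', (∀ n : ℕ, C' ((A' ^ n) x') = 0) → x' = 0) :
    (∀ u : ℕ →₀ U,
      (∑ k ∈ u.support, (A ^ k) (B (u k))) = 0 →
        (∑ k ∈ u.support, (A' ^ k) (B' (u k))) = 0) ∧
    ((∀ x : X, (∀ n : ℕ, C ((A ^ n) x) = 0) → x = 0) →
      ∀ u : ℕ →₀ U,
        (∑ k ∈ u.support, (A' ^ k) (B' (u k))) = 0 →
          (∑ k ∈ u.support, (A ^ k) (B (u k))) = 0) :=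
  stmt17_general A B C A' B' C' hmom hobs'
end
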